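/- arXiv:1706.01456 — 3 statements merged into one kernel-verified Lean document; each statement's English description precedes it below -/
import Mathlib

section
/- Let u be continuously differentiable on the closure of Ω and suppose u(x,y,h) = φ for all (x,y) with x² + y² ≤ ρ², where φ is a real constant. Then ∫_Ω u² dx ≤ 4h² ( ∫_Ω |∇u|² dx + πρ²φ² ). -/
/-! Along each vertical segment of the cylinder, `u` equals its boundary value `φ` on the top face
minus the integral of `∂u/∂z`, so Cauchy–Schwarz gives `u² ≤ 2φ² + 2h ∫₀ʰ (∂u/∂z)² dz`.
Integrating over the cylinder with Fubini, the right-hand side contributes `2φ²·πρ²h` and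
`2h² ∫_Ω (∂u/∂z)²`, and both are bounded by the claimed terms because `2h ≥ 1`. -/

open MeasureTheory Real

/-- The open cylinder `Ω = {(x,y,z) : x² + y² < ρ², 0 < z < h}` in `ℝ³`. -/
def cyl (ρ h : ℝ) : Set (Fin 3 → ℝ) :=
  {x | (x 0) ^ 2 + (x 1) ^ 2 < ρ ^ 2 ∧ 0 < x 2 ∧ x 2 < h}

/-- The `i`-th partial derivative of `f`, computed within the closed cylinder. -/
noncomputable def pdC (ρ h : ℝ) (i : Fin 3) (f : (Fin 3 → ℝ) → ℝ) (x : Fin 3 → ℝ) : ℝ :=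
  fderivWithin ℝ f (closure (cyl ρ h)) x (Pi.single i 1)

open Set

theorem sq_integral_le_measureReal_mul_integral_sq {α : Type*} [MeasurableSpace α]
    {μ : Measure α} [IsFiniteMeasure μ] {f : α → ℝ} (hf : Integrable f μ)
    (hf2 : Integrable (fun x => f x ^ 2) μ) :
    (∫ x, f x ∂μ) ^ 2 ≤ μ.real univ * ∫ x, f x ^ 2 ∂μ := by
  rcases eq_zero_or_neZero μ with rfl | hμ
  · simp
  have hm : 0 < μ.real univ := by
    simpa [measureReal_def, ENNReal.toReal_pos_iff, measure_lt_top] using hμ.out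
  have jensen := (even_two.convexOn_pow (𝕜 := ℝ)).map_average_le (continuousOn_pow 2)
    isClosed_univ (by simp) hf hf2
  simp only [average_eq, smul_eq_mul, inv_mul_eq_div] at jensen
  rw [div_pow, div_le_div_iff₀ (by positivity) hm] at jensen
  nlinarith

theorem sq_le_two_mul_sq_add_two_mul_integral_deriv_sq {f f' : ℝ → ℝ} {a b : ℝ} (hab : a ≤ b)
    (hf : ∀ t ∈ Icc a b, HasDerivWithinAt f (f' t) (Icc a b) t)
    (hf' : ContinuousOn f' (Icc a b)) :
    f a ^ 2 ≤ 2 * f b ^ 2 + 2 * (b - a) * ∫ t in a..b, f' t ^ 2 := by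
  have hftc : ∫ t in a..b, f' t = f b - f a :=
    intervalIntegral.integral_eq_sub_of_hasDerivAt_of_le hab
      (fun t ht => (hf t ht).continuousWithinAt)
      (fun t ht => (hf t (Ioo_subset_Icc_self ht)).hasDerivAt (Icc_mem_nhds ht.1 ht.2))
      (hf'.intervalIntegrable_of_Icc hab)
  have hcs : (∫ t in a..b, f' t) ^ 2 ≤ (b - a) * ∫ t in a..b, f' t ^ 2 := by
    simp only [intervalIntegral.integral_of_le hab]
    convert sq_integral_le_measureReal_mul_integral_sq (μ := volume.restrict (Ioc a b)) ?_ ?_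
      using 2
    · simp [hab]
    · exact (hf'.integrableOn_Icc).mono_set Ioc_subset_Icc_self
    · exact ((hf'.pow 2).integrableOn_Icc).mono_set Ioc_subset_Icc_self
  rw [hftc] at hcs
  nlinarith [sq_nonneg (2 * f b - f a)]

theorem ContinuousOn.integrableOn_of_isBounded {X F : Type*} [MetricSpace X]
    [ProperSpace X] [MeasurableSpace X] [OpensMeasurableSpace X] [NormedAddCommGroup F]
    {μ : Measure X} [IsFiniteMeasureOnCompacts μ] {s : Set X} {f : X → F}
    (hs : Bornology.IsBounded s) (hf : ContinuousOn f (closure s)) :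
    IntegrableOn f s μ :=
  (hf.integrableOn_compact hs.isCompact_closure).mono_set subset_closure

theorem integral_integral_fst_comp_snd {α β E : Type*} [MeasurableSpace α] [MeasurableSpace β]
    [NormedAddCommGroup E] [NormedSpace ℝ E] {μ : Measure α} {ν : Measure β}
    [IsFiniteMeasure μ] [SFinite ν] {F : α × β → E} (hF : Integrable F (μ.prod ν)) :
    ∫ z, ∫ s, F (s, z.2) ∂μ ∂(μ.prod ν) = μ.real univ • ∫ z, F z ∂(μ.prod ν) := by
  rw [integral_fun_snd (fun y => ∫ s, F (s, y) ∂μ), integral_prod_symm F hF]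

theorem isOpen_cyl (ρ h : ℝ) : IsOpen (cyl ρ h) :=
  (isOpen_lt (f := fun x : Fin 3 → ℝ => x 0 ^ 2 + x 1 ^ 2) (by fun_prop) continuous_const).inter
    ((isOpen_lt continuous_const (continuous_apply 2)).inter
      (isOpen_lt (continuous_apply 2) continuous_const))

theorem convex_cyl (ρ h : ℝ) : Convex ℝ (cyl ρ h) := by
  have hproj (i : Fin 3) : IsLinearMap ℝ fun x : Fin 3 → ℝ => x i :=
    (LinearMap.proj (R := ℝ) (φ := fun _ : Fin 3 => ℝ) i).isLinear
  have hsq (i : Fin 3) : ConvexOn ℝ univ fun x : Fin 3 → ℝ => x i ^ 2 :=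
    (even_two.convexOn_pow (𝕜 := ℝ)).comp_linearMap
      (LinearMap.proj (R := ℝ) (φ := fun _ : Fin 3 => ℝ) i)
  have hdisk : Convex ℝ {x : Fin 3 → ℝ | x 0 ^ 2 + x 1 ^ 2 < ρ ^ 2} := by
    simpa only [mem_univ, true_and, Pi.add_apply] using ((hsq 0).add (hsq 1)).convex_lt (ρ ^ 2)
  exact hdisk.inter ((convex_halfSpace_gt (hproj 2) 0).inter (convex_halfSpace_lt (hproj 2) h))

theorem isBounded_cyl (ρ h : ℝ) : Bornology.IsBounded (cyl ρ h) := by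
  refine (Metric.isBounded_closedBall (x := (0 : Fin 3 → ℝ)) (r := |ρ| + |h|)).subset ?_
  rintro x ⟨hxy, hz0, hzh⟩
  have hx0 : |x 0| ≤ |ρ| := sq_le_sq.mp (by nlinarith [sq_nonneg (x 1)])
  have hx1 : |x 1| ≤ |ρ| := sq_le_sq.mp (by nlinarith [sq_nonneg (x 0)])
  have hx2 : |x 2| ≤ |h| := by rw [abs_of_pos hz0]; exact hzh.le.trans (le_abs_self h)
  rw [Metric.mem_closedBall, dist_zero_right, pi_norm_le_iff_of_nonneg (by positivity)]
  intro i
  fin_cases i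
  exacts [by simpa using hx0.trans (le_add_of_nonneg_right (abs_nonneg h)),
    by simpa using hx1.trans (le_add_of_nonneg_right (abs_nonneg h)),
    by simpa using hx2.trans (le_add_of_nonneg_left (abs_nonneg ρ))]

theorem uniqueDiffOn_closure_cyl {ρ h : ℝ} (hρ : 0 < ρ) (hh : 0 < h) :
    UniqueDiffOn ℝ (closure (cyl ρ h)) := by
  have hmem : ![0, 0, h / 2] ∈ cyl ρ h := by
    refine ⟨by simpa using pow_pos hρ 2, by simpa using half_pos hh, by simpa using half_lt_self hh⟩
  refine uniqueDiffOn_convex (convex_cyl ρ h).closure ⟨![0, 0, h / 2], ?_⟩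
  exact (isOpen_cyl ρ h).subset_interior_iff.mpr subset_closure hmem

theorem continuousOn_pdC {ρ h : ℝ} (hρ : 0 < ρ) (hh : 0 < h) {u : (Fin 3 → ℝ) → ℝ}
    (hu : ContDiffOn ℝ 1 u (closure (cyl ρ h))) (i : Fin 3) :
    ContinuousOn (pdC ρ h i u) (closure (cyl ρ h)) :=
  (hu.continuousOn_fderivWithin (uniqueDiffOn_closure_cyl hρ hh) le_rfl).clm_apply
    continuousOn_const

theorem mapsTo_vertical_segment_closure_cyl {ρ h a b : ℝ} (hh : 0 < h)
    (hab : a ^ 2 + b ^ 2 < ρ ^ 2) :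
    MapsTo (fun t : ℝ => ![a, b, t]) (Icc 0 h) (closure (cyl ρ h)) := by
  have hcont : Continuous fun t : ℝ => ![a, b, t] := by fun_prop
  rw [← closure_Ioo hh.ne]
  refine MapsTo.closure (fun t ht => ?_) hcont
  exact ⟨by simpa using hab, by simpa using ht.1, by simpa using ht.2⟩

theorem hasDerivAt_vertical_segment (a b t : ℝ) :
    HasDerivAt (fun s : ℝ => ![a, b, s]) (Pi.single 2 1) t := by
  rw [hasDerivAt_pi]
  intro i
  fin_cases i
  · simpa [Pi.single] using hasDerivAt_const t a
  · simpa [Pi.single] using hasDerivAt_const t b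
  · simpa [Pi.single] using hasDerivAt_id' t

def disk (ρ : ℝ) : Set (Fin 2 → ℝ) := {w | w 0 ^ 2 + w 1 ^ 2 < ρ ^ 2}

noncomputable def heightBaseEquiv : ℝ × (Fin 2 → ℝ) ≃ᵐ (Fin 3 → ℝ) :=
  (MeasurableEquiv.piFinSuccAbove (fun _ : Fin 3 => ℝ) 2).symm

theorem heightBaseEquiv_apply (t : ℝ) (w : Fin 2 → ℝ) :
    heightBaseEquiv (t, w) = ![w 0, w 1, t] := by
  rw [heightBaseEquiv, MeasurableEquiv.symm_apply_eq]
  ext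
  · simp [MeasurableEquiv.piFinSuccAbove, Fin.insertNthEquiv]
  · next j =>
      fin_cases j <;> rfl

theorem heightBaseEquiv_preimage_cyl (ρ h : ℝ) :
    heightBaseEquiv ⁻¹' cyl ρ h = Ioo 0 h ×ˢ disk ρ := by
  ext ⟨t, w⟩
  simp only [mem_preimage, heightBaseEquiv_apply, cyl, disk, mem_ofPred_eq, mem_prod, mem_Ioo,
    Matrix.cons_val_zero, Matrix.cons_val_one, Matrix.cons_val_two, Matrix.head_cons,
    Matrix.tail_cons]
  tauto

theorem measurePreserving_heightBaseEquiv : MeasurePreserving heightBaseEquiv :=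
  (volume_preserving_piFinSuccAbove (fun _ : Fin 3 => ℝ) 2).symm _

theorem measurePreserving_heightBaseEquiv_cyl (ρ h : ℝ) :
    MeasurePreserving heightBaseEquiv
      ((volume.restrict (Ioo 0 h)).prod (volume.restrict (disk ρ)))
      (volume.restrict (cyl ρ h)) := by
  have hmp := measurePreserving_heightBaseEquiv.restrict_preimage (isOpen_cyl ρ h).measurableSet
  rwa [heightBaseEquiv_preimage_cyl, Measure.volume_eq_prod, ← Measure.prod_restrict] at hmp

theorem setIntegral_cyl_eq_integral_prod {E : Type*} [NormedAddCommGroup E] [NormedSpace ℝ E]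
    (ρ h : ℝ) (f : (Fin 3 → ℝ) → E) :
    ∫ x in cyl ρ h, f x =
      ∫ z, f (heightBaseEquiv z) ∂(volume.restrict (Ioo 0 h)).prod (volume.restrict (disk ρ)) :=
  ((measurePreserving_heightBaseEquiv_cyl ρ h).integral_comp' f).symm

theorem integrableOn_cyl_iff {E : Type*} [NormedAddCommGroup E] {ρ h : ℝ}
    {f : (Fin 3 → ℝ) → E} :
    IntegrableOn f (cyl ρ h) ↔
      Integrable (fun z => f (heightBaseEquiv z))
        ((volume.restrict (Ioo 0 h)).prod (volume.restrict (disk ρ))) :=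
  ((measurePreserving_heightBaseEquiv_cyl ρ h).integrable_comp_emb
    heightBaseEquiv.measurableEmbedding).symm

theorem volume_disk {ρ : ℝ} (hρ : 0 < ρ) : volume (disk ρ) = ENNReal.ofReal (π * ρ ^ 2) := by
  have hmeas : MeasurableSet (disk ρ) := measurableSet_lt (by fun_prop) measurable_const
  have hpre : (MeasurableEquiv.toLp 2 (Fin 2 → ℝ)).symm ⁻¹' disk ρ
      = Metric.ball (0 : EuclideanSpace ℝ (Fin 2)) ρ := by
    rw [EuclideanSpace.ball_zero_eq _ hρ.le]
    ext x
    simp [disk, Fin.sum_univ_two, MeasurableEquiv.coe_toLp_symm]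
  rw [← (EuclideanSpace.volume_preserving_symm_measurableEquiv_toLp (Fin 2)).measure_preimage
    hmeas.nullMeasurableSet, hpre,
    EuclideanSpace.volume_ball, Fintype.card_fin]
  norm_num [Real.Gamma_two, sq_sqrt pi_pos.le, ← ENNReal.ofReal_pow hρ.le,
    ← ENNReal.ofReal_mul (sq_nonneg ρ), mul_comm]

theorem volume_cyl {ρ h : ℝ} (hρ : 0 < ρ) (hh : 0 ≤ h) :
    volume.real (cyl ρ h) = π * ρ ^ 2 * h := by
  rw [measureReal_def, ← measurePreserving_heightBaseEquiv.measure_preimage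
    (isOpen_cyl ρ h).measurableSet.nullMeasurableSet, heightBaseEquiv_preimage_cyl,
    Measure.volume_eq_prod, Measure.prod_prod, Real.volume_Ioo, sub_zero, volume_disk hρ,
    ENNReal.toReal_mul, ENNReal.toReal_ofReal hh, ENNReal.toReal_ofReal (by positivity)]
  ring

noncomputable def verticalIntegral (h : ℝ) (g : (Fin 3 → ℝ) → ℝ) (x : Fin 3 → ℝ) : ℝ :=
  ∫ t in Ioo 0 h, g ![x 0, x 1, t]

theorem verticalIntegral_heightBaseEquiv (h : ℝ) (g : (Fin 3 → ℝ) → ℝ) (z : ℝ × (Fin 2 → ℝ)) :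
    verticalIntegral h g (heightBaseEquiv z) = ∫ s in Ioo 0 h, g (heightBaseEquiv (s, z.2)) := by
  obtain ⟨t, w⟩ := z
  simp [verticalIntegral, heightBaseEquiv_apply]

theorem integrableOn_verticalIntegral {ρ h : ℝ} {g : (Fin 3 → ℝ) → ℝ}
    (hg : IntegrableOn g (cyl ρ h)) : IntegrableOn (verticalIntegral h g) (cyl ρ h) := by
  rw [integrableOn_cyl_iff] at hg ⊢
  refine (hg.integral_prod_right.comp_snd _).congr (ae_of_all _ fun z => ?_)
  exact (verticalIntegral_heightBaseEquiv h g z).symm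

theorem setIntegral_verticalIntegral {ρ h : ℝ} (hh : 0 ≤ h) {g : (Fin 3 → ℝ) → ℝ}
    (hg : IntegrableOn g (cyl ρ h)) :
    ∫ x in cyl ρ h, verticalIntegral h g x = h * ∫ x in cyl ρ h, g x := by
  simp_rw [setIntegral_cyl_eq_integral_prod, verticalIntegral_heightBaseEquiv]
  rw [integral_integral_fst_comp_snd (integrableOn_cyl_iff.mp hg)]
  simp [hh]

theorem sq_le_two_mul_sq_add_verticalIntegral {ρ h φ : ℝ} (hρ : 0 < ρ) (hh : 0 < h)
    {u : (Fin 3 → ℝ) → ℝ} (hu : ContDiffOn ℝ 1 u (closure (cyl ρ h)))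
    (hbc : ∀ x y : ℝ, x ^ 2 + y ^ 2 ≤ ρ ^ 2 → u ![x, y, h] = φ) {p : Fin 3 → ℝ}
    (hp : p ∈ cyl ρ h) :
    u p ^ 2 ≤ 2 * φ ^ 2 + 2 * h * verticalIntegral h (fun x => pdC ρ h 2 u x ^ 2) p := by
  obtain ⟨hp01, hp2, hp2h⟩ := hp
  set γ : ℝ → Fin 3 → ℝ := fun t => ![p 0, p 1, t]
  have hγ : MapsTo γ (Icc 0 h) (closure (cyl ρ h)) := mapsTo_vertical_segment_closure_cyl hh hp01
  have hsub : Icc (p 2) h ⊆ Icc 0 h := Icc_subset_Icc_left hp2.le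
  have hderiv : ∀ t ∈ Icc (p 2) h,
      HasDerivWithinAt (u ∘ γ) (pdC ρ h 2 u (γ t)) (Icc (p 2) h) t := fun t ht =>
    ((hu.differentiableOn one_ne_zero _ (hγ (hsub ht))).hasFDerivWithinAt.comp_hasDerivWithinAt t
      (hasDerivAt_vertical_segment _ _ t).hasDerivWithinAt (hγ.mono_left hsub))
  have hcont : ContinuousOn (fun t => pdC ρ h 2 u (γ t)) (Icc 0 h) :=
    (continuousOn_pdC hρ hh hu 2).comp (by fun_prop) hγ
  have hbound := sq_le_two_mul_sq_add_two_mul_integral_deriv_sq hp2h.le hderiv (hcont.mono hsub)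
  have hstart : (u ∘ γ) (p 2) = u p := congrArg u (by ext i; fin_cases i <;> rfl)
  have htop : (u ∘ γ) h = φ := hbc _ _ hp01.le
  have hsegment_le : ∫ t in (p 2)..h, pdC ρ h 2 u (γ t) ^ 2 ≤
      verticalIntegral h (fun x => pdC ρ h 2 u x ^ 2) p := by
    rw [intervalIntegral.integral_of_le hp2h.le, integral_Ioc_eq_integral_Ioo]
    exact setIntegral_mono_set ((hcont.pow 2).integrableOn_Icc.mono_set Ioo_subset_Icc_self)
      (ae_of_all _ fun t => sq_nonneg _) (Ioo_subset_Ioo_left hp2.le).eventuallyLE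
  have hnonneg : 0 ≤ ∫ t in (p 2)..h, pdC ρ h 2 u (γ t) ^ 2 :=
    intervalIntegral.integral_nonneg hp2h.le fun t _ => sq_nonneg _
  rw [hstart, htop] at hbound
  nlinarith

theorem setIntegral_sq_le_of_eq_on_top {ρ h φ : ℝ} (hρ : 0 < ρ) (hh : 0 < h)
    {u : (Fin 3 → ℝ) → ℝ} (hu : ContDiffOn ℝ 1 u (closure (cyl ρ h)))
    (hbc : ∀ x y : ℝ, x ^ 2 + y ^ 2 ≤ ρ ^ 2 → u ![x, y, h] = φ) :
    ∫ x in cyl ρ h, u x ^ 2 ≤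
      2 * π * ρ ^ 2 * h * φ ^ 2 + 2 * h ^ 2 * ∫ x in cyl ρ h, pdC ρ h 2 u x ^ 2 := by
  have hmeas : MeasurableSet (cyl ρ h) := (isOpen_cyl ρ h).measurableSet
  set g : (Fin 3 → ℝ) → ℝ := fun x => pdC ρ h 2 u x ^ 2
  have hg : IntegrableOn g (cyl ρ h) :=
    ((continuousOn_pdC hρ hh hu 2).pow 2).integrableOn_of_isBounded (isBounded_cyl ρ h)
  have hconst : IntegrableOn (fun _ => 2 * φ ^ 2) (cyl ρ h) :=
    integrableOn_const (isBounded_cyl ρ h).measure_lt_top.ne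
  have hrhs := hconst.add ((integrableOn_verticalIntegral hg).const_mul (2 * h))
  calc ∫ x in cyl ρ h, u x ^ 2
      ≤ ∫ x in cyl ρ h, (2 * φ ^ 2 + 2 * h * verticalIntegral h g x) :=
        setIntegral_mono_on ((hu.continuousOn.pow 2).integrableOn_of_isBounded (isBounded_cyl ρ h))
          hrhs hmeas fun p hp => sq_le_two_mul_sq_add_verticalIntegral hρ hh hu hbc hp
    _ = 2 * π * ρ ^ 2 * h * φ ^ 2 + 2 * h ^ 2 * ∫ x in cyl ρ h, g x := by
        rw [integral_add hconst ((integrableOn_verticalIntegral hg).const_mul _),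
          integral_const_mul (2 * h) (verticalIntegral h g), setIntegral_const,
          setIntegral_verticalIntegral hh.le hg, volume_cyl hρ hh.le, smul_eq_mul]
        ring

/-- If `u ∈ C¹(closure Ω)` and `u(x,y,h) = φ` for all `x² + y² ≤ ρ²`,
then `∫_Ω u² ≤ 4h² ( ∫_Ω |∇u|² + πρ²φ² )`. -/
theorem friedrichs_type_estimate_cylinder (ρ h : ℝ) (hρ : 0 < ρ) (hh : 1 / 2 < h)
    (u : (Fin 3 → ℝ) → ℝ) (φ : ℝ)
    (hu : ContDiffOn ℝ 1 u (closure (cyl ρ h)))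
    (hbc : ∀ x y : ℝ, x ^ 2 + y ^ 2 ≤ ρ ^ 2 → u ![x, y, h] = φ) :
    (∫ x in cyl ρ h, (u x) ^ 2) ≤
      4 * h ^ 2 * ((∫ x in cyl ρ h, ∑ i, (pdC ρ h i u x) ^ 2) + π * ρ ^ 2 * φ ^ 2) := by
  have hh0 : 0 < h := by linarith
  have hmeas : MeasurableSet (cyl ρ h) := (isOpen_cyl ρ h).measurableSet
  have hvert_le : ∫ x in cyl ρ h, pdC ρ h 2 u x ^ 2 ≤ ∫ x in cyl ρ h, ∑ i, pdC ρ h i u x ^ 2 :=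
    setIntegral_mono_on
      (((continuousOn_pdC hρ hh0 hu 2).pow 2).integrableOn_of_isBounded (isBounded_cyl ρ h))
      ((continuousOn_finsetSum _ fun i _ => (continuousOn_pdC hρ hh0 hu i).pow 2)
        |>.integrableOn_of_isBounded (isBounded_cyl ρ h))
      hmeas fun x _ =>
        Finset.single_le_sum (fun i _ => sq_nonneg (pdC ρ h i u x)) (Finset.mem_univ 2)
  have hvert_nonneg : 0 ≤ ∫ x in cyl ρ h, pdC ρ h 2 u x ^ 2 :=
    setIntegral_nonneg hmeas fun x _ => sq_nonneg _
  have hX : 0 ≤ π * ρ ^ 2 * φ ^ 2 := by positivity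
  nlinarith [setIntegral_sq_le_of_eq_on_top hρ hh0 hu hbc,
    mul_nonneg (mul_nonneg hh0.le hX) (by linarith : (0 : ℝ) ≤ 2 * h - 1),
    mul_le_mul_of_nonneg_left hvert_le (sq_nonneg h), mul_nonneg (sq_nonneg h) hvert_nonneg]
end

section
/- Let h > 1/2 and let u : [0,h] → ℝ be continuously differentiable. Then ∫₀^h u(z)² dz ≤ 4h² ( ∫₀^h u'(z)² dz + u(h)² ). -/
/-!
Write `u z = u h - ∫_z^h u'`; Cauchy–Schwarz bounds the integral by `√h · ‖u'‖₂`, so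
`u z ^ 2 ≤ 2 h ‖u'‖₂² + 2 u(h)²` for every `z`. Integrating over `[0, h]` gives
`∫ u² ≤ 2 h² ‖u'‖₂² + 2 h u(h)²`, and `2 h ≤ 4 h²` exactly when `h ≥ 1/2`.
Cauchy–Schwarz itself is Jensen's inequality for `x ↦ x²` and the interval average.
-/

open MeasureTheory Set intervalIntegral

theorem sq_intervalIntegral_le_mul_intervalIntegral_sq {a b : ℝ} (hab : a ≤ b) {f : ℝ → ℝ}
    (hf : IntervalIntegrable f volume a b)
    (hf2 : IntervalIntegrable (fun x => f x ^ 2) volume a b) :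
    (∫ x in a..b, f x) ^ 2 ≤ (b - a) * ∫ x in a..b, f x ^ 2 := by
  rcases hab.eq_or_lt with rfl | hlt
  · simp
  have hlen : 0 < b - a := sub_pos.2 hlt
  have jensen := (even_two.convexOn_pow (𝕜 := ℝ)).map_set_average_le
    (continuous_pow 2).continuousOn isClosed_univ (t := uIoc a b) (by simp [hlen.ne'])
    (by simp) (by simp) hf.def' hf2.def'
  rw [interval_average_eq_div, interval_average_eq_div, div_pow,
    div_le_div_iff₀ (by positivity) hlen] at jensen
  nlinarith

section DerivBounds

variable {a b : ℝ} {u u' : ℝ → ℝ}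

theorem sq_sub_le_mul_intervalIntegral_deriv_sq (hab : a ≤ b)
    (hderiv : ∀ x ∈ Icc a b, HasDerivAt u (u' x) x) (hcont : ContinuousOn u' (Icc a b)) :
    (u b - u a) ^ 2 ≤ (b - a) * ∫ x in a..b, u' x ^ 2 := by
  rw [← uIcc_of_le hab] at hderiv hcont
  rw [← integral_eq_sub_of_hasDerivAt hderiv hcont.intervalIntegrable]
  exact sq_intervalIntegral_le_mul_intervalIntegral_sq hab hcont.intervalIntegrable
    (hcont.pow 2).intervalIntegrable

theorem sq_le_of_hasDerivAt_of_mem_Icc (hderiv : ∀ x ∈ Icc a b, HasDerivAt u (u' x) x)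
    (hcont : ContinuousOn u' (Icc a b)) {z : ℝ} (hz : z ∈ Icc a b) :
    u z ^ 2 ≤ 2 * (b - a) * (∫ x in a..b, u' x ^ 2) + 2 * u b ^ 2 := by
  have hsub : Icc z b ⊆ Icc a b := Icc_subset_Icc_left hz.1
  have htail : (u b - u z) ^ 2 ≤ (b - z) * ∫ x in z..b, u' x ^ 2 :=
    sq_sub_le_mul_intervalIntegral_deriv_sq hz.2 (fun x hx => hderiv x (hsub hx))
      (hcont.mono hsub)
  have hmono : (b - z) * ∫ x in z..b, u' x ^ 2 ≤ (b - a) * ∫ x in a..b, u' x ^ 2 := by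
    have hab := hz.1.trans hz.2
    gcongr
    · exact integral_nonneg hz.2 fun x _ => sq_nonneg _
    · linarith [hz.1]
    · refine integral_mono_interval hz.1 hz.2 le_rfl (ae_of_all _ fun x => sq_nonneg _) ?_
      rw [← uIcc_of_le hab] at hcont
      exact (hcont.pow 2).intervalIntegrable
  nlinarith [sq_nonneg (2 * u b - u z)]

theorem intervalIntegral_sq_le_of_hasDerivAt (hab : a ≤ b)
    (hderiv : ∀ x ∈ Icc a b, HasDerivAt u (u' x) x) (hcont : ContinuousOn u' (Icc a b)) :
    ∫ x in a..b, u x ^ 2 ≤ 2 * (b - a) ^ 2 * (∫ x in a..b, u' x ^ 2) + 2 * (b - a) * u b ^ 2 := by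
  have hu : ContinuousOn u (uIcc a b) := by
    rw [uIcc_of_le hab]
    exact fun x hx => (hderiv x hx).continuousAt.continuousWithinAt
  calc ∫ x in a..b, u x ^ 2
      ≤ ∫ _ in a..b, 2 * (b - a) * (∫ x in a..b, u' x ^ 2) + 2 * u b ^ 2 :=
        integral_mono_on hab (hu.pow 2).intervalIntegrable intervalIntegrable_const
          fun z hz => sq_le_of_hasDerivAt_of_mem_Icc hderiv hcont hz
    _ = _ := by rw [intervalIntegral.integral_const, smul_eq_mul]; ring

end DerivBounds

/-- For `h > 1/2` and `u` continuously differentiable on `[0,h]`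
(with derivative `u'`): `∫₀ʰ u² ≤ 4h² ( ∫₀ʰ (u')² + u(h)² )`. -/
theorem friedrichs_type_estimate (h : ℝ) (hh : 1 / 2 < h) (u u' : ℝ → ℝ)
    (hderiv : ∀ z ∈ Set.Icc (0 : ℝ) h, HasDerivAt u (u' z) z)
    (hcont : ContinuousOn u' (Set.Icc (0 : ℝ) h)) :
    (∫ z in (0 : ℝ)..h, (u z) ^ 2) ≤
      4 * h ^ 2 * ((∫ z in (0 : ℝ)..h, (u' z) ^ 2) + (u h) ^ 2) := by
  have hpos : 0 < h := by linarith
  have hA : 0 ≤ ∫ z in (0 : ℝ)..h, u' z ^ 2 := integral_nonneg hpos.le fun x _ => sq_nonneg _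
  calc ∫ z in (0 : ℝ)..h, u z ^ 2
      ≤ 2 * h ^ 2 * (∫ z in (0 : ℝ)..h, u' z ^ 2) + 2 * h * u h ^ 2 := by
        simpa using intervalIntegral_sq_le_of_hasDerivAt hpos.le hderiv hcont
    _ ≤ 4 * h ^ 2 * (∫ z in (0 : ℝ)..h, u' z ^ 2) + 4 * h ^ 2 * u h ^ 2 := by
        gcongr ?_ * _ + ?_ * _ <;> nlinarith
    _ = _ := by ring
end

section
/- Let h > 1/2 and let u : [0,h] → ℝ be twice continuously differentiable with u(0) = 0. Set φ = u(h) and α = u'(h). Then ∫₀^h u'(z)² dz ≤ 2φα + φ² + 4h² ∫₀^h u''(z)² dz. -/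
/-!
Integration by parts gives `∫ u'² = φ α - ∫ u u''`. Expanding `0 ≤ ∫ (u + h² u'')²` bounds
`-2 h² ∫ u u''` by `∫ u² + h⁴ ∫ u''²`, and since `u 0 = 0` the Poincaré inequality
`∫ u² ≤ h² ∫ u'²` (Cauchy–Schwarz applied to `u t = ∫₀ᵗ u'`) absorbs the `∫ u²` term. This leaves
`∫ u'² ≤ 2 φ α + h² ∫ u''²`, which is stronger than the claim.
-/

open MeasureTheory Set

section

variable {a b : ℝ}

lemma integral_sq_add_two_mul_integral_mul_add_sq_nonneg {f g : ℝ → ℝ} (hab : a ≤ b)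
    (hf : ContinuousOn f (Icc a b)) (hg : ContinuousOn g (Icc a b)) (c : ℝ) :
    0 ≤ (∫ x in a..b, f x ^ 2) + 2 * c * (∫ x in a..b, f x * g x)
      + c ^ 2 * ∫ x in a..b, g x ^ 2 := by
  rw [← uIcc_of_le hab] at hf hg
  have hf2 : IntervalIntegrable (fun x => f x ^ 2) volume a b := (hf.pow 2).intervalIntegrable
  have hfg : IntervalIntegrable (fun x => 2 * c * (f x * g x)) volume a b :=
    (hf.mul hg).intervalIntegrable.const_mul _
  have hg2 : IntervalIntegrable (fun x => c ^ 2 * g x ^ 2) volume a b :=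
    (hg.pow 2).intervalIntegrable.const_mul _
  calc 0 ≤ ∫ x in a..b, (f x + c * g x) ^ 2 :=
        intervalIntegral.integral_nonneg hab fun x _ => sq_nonneg _
    _ = ∫ x in a..b, f x ^ 2 + 2 * c * (f x * g x) + c ^ 2 * g x ^ 2 := by
      congr 1; ext x; ring
    _ = _ := by
      rw [intervalIntegral.integral_add (hf2.add hfg) hg2,
        intervalIntegral.integral_add hf2 hfg, intervalIntegral.integral_const_mul,
        intervalIntegral.integral_const_mul]

lemma sq_integral_le_mul_integral_sq {f : ℝ → ℝ} (hab : a ≤ b) (hf : ContinuousOn f (Icc a b)) :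
    (∫ x in a..b, f x) ^ 2 ≤ (b - a) * ∫ x in a..b, f x ^ 2 := by
  have hquad : ∀ c : ℝ, 0 ≤ (b - a) * (c * c) + 2 * (∫ x in a..b, f x) * c
      + ∫ x in a..b, f x ^ 2 := fun c => by
    have := integral_sq_add_two_mul_integral_mul_add_sq_nonneg hab hf continuousOn_const c
      (g := fun _ => 1)
    simp only [mul_one, one_pow, intervalIntegral.integral_const, smul_eq_mul] at this
    linarith
  have := discrim_le_zero hquad
  rw [discrim] at this
  linarith

variable {u u' u'' : ℝ → ℝ}

lemma integral_sq_le_sq_mul_integral_deriv_sq (hab : a ≤ b)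
    (hu : ∀ x ∈ Icc a b, HasDerivAt u (u' x) x) (hu' : ContinuousOn u' (Icc a b))
    (ha : u a = 0) :
    (∫ x in a..b, u x ^ 2) ≤ (b - a) ^ 2 * ∫ x in a..b, u' x ^ 2 := by
  have hbound : ∀ t ∈ Icc a b, u t ^ 2 ≤ (b - a) * ∫ x in a..b, u' x ^ 2 := by
    intro t ht
    have hsub : Icc a t ⊆ Icc a b := Icc_subset_Icc_right ht.2
    have hftc : (∫ x in a..t, u' x) = u t := by
      rw [intervalIntegral.integral_eq_sub_of_hasDerivAt
        (fun x hx => hu x (hsub (uIcc_of_le ht.1 ▸ hx)))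
        ((hu'.mono hsub).intervalIntegrable_of_Icc ht.1), ha, sub_zero]
    have hmono : (∫ x in a..t, u' x ^ 2) ≤ ∫ x in a..b, u' x ^ 2 :=
      intervalIntegral.integral_mono_interval le_rfl ht.1 ht.2
        (Filter.Eventually.of_forall fun x => sq_nonneg _)
        ((hu'.pow 2).intervalIntegrable_of_Icc hab)
    calc u t ^ 2 = (∫ x in a..t, u' x) ^ 2 := by rw [hftc]
      _ ≤ (t - a) * ∫ x in a..t, u' x ^ 2 := sq_integral_le_mul_integral_sq ht.1 (hu'.mono hsub)
      _ ≤ (b - a) * ∫ x in a..b, u' x ^ 2 := by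
        gcongr
        · exact intervalIntegral.integral_nonneg ht.1 fun x _ => sq_nonneg _
        · exact ht.2
  have hu_cont : ContinuousOn u (Icc a b) :=
    fun x hx => (hu x hx).continuousAt.continuousWithinAt
  calc (∫ x in a..b, u x ^ 2) ≤ ∫ _ in a..b, (b - a) * ∫ x in a..b, u' x ^ 2 :=
        intervalIntegral.integral_mono_on hab ((hu_cont.pow 2).intervalIntegrable_of_Icc hab)
          intervalIntegrable_const hbound
    _ = (b - a) ^ 2 * ∫ x in a..b, u' x ^ 2 := by
      rw [intervalIntegral.integral_const, smul_eq_mul]; ring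

lemma integral_deriv_sq_le (hab : a < b)
    (hu : ∀ x ∈ Icc a b, HasDerivAt u (u' x) x) (hu' : ∀ x ∈ Icc a b, HasDerivAt u' (u'' x) x)
    (hu'' : ContinuousOn u'' (Icc a b)) (ha : u a = 0) :
    (∫ x in a..b, u' x ^ 2) ≤ 2 * u b * u' b + (b - a) ^ 2 * ∫ x in a..b, u'' x ^ 2 := by
  have hu_cont : ContinuousOn u (Icc a b) :=
    fun x hx => (hu x hx).continuousAt.continuousWithinAt
  have hu'_cont : ContinuousOn u' (Icc a b) :=
    fun x hx => (hu' x hx).continuousAt.continuousWithinAt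
  have hibp : (∫ x in a..b, u x * u'' x) = u b * u' b - ∫ x in a..b, u' x ^ 2 := by
    rw [← uIcc_of_le hab.le] at hu hu' hu'' hu'_cont
    simp_rw [sq]
    rw [intervalIntegral.integral_mul_deriv_eq_deriv_mul hu hu' hu'_cont.intervalIntegrable
      hu''.intervalIntegrable, ha, zero_mul, sub_zero]
  have hpoincare := integral_sq_le_sq_mul_integral_deriv_sq hab.le hu hu'_cont ha
  have hsquare := integral_sq_add_two_mul_integral_mul_add_sq_nonneg hab.le hu_cont hu''
    ((b - a) ^ 2)
  have hpos : 0 < (b - a) ^ 2 := by have := sub_pos.2 hab; positivity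
  rw [hibp] at hsquare
  have hfactored : 0 ≤ (b - a) ^ 2 *
      (2 * u b * u' b + (b - a) ^ 2 * (∫ x in a..b, u'' x ^ 2) - ∫ x in a..b, u' x ^ 2) := by
    linear_combination hsquare + hpoincare
  exact sub_nonneg.1 ((mul_nonneg_iff_of_pos_left hpos).1 hfactored)

end

/-- For `h > 1/2` and `u` twice continuously differentiable on `[0,h]`
(with first and second derivatives `u'`, `u''`) satisfying `u(0) = 0`, and with
`φ = u(h)`, `α = u'(h)`: `∫₀ʰ (u')² ≤ 2φα + φ² + 4h² ∫₀ʰ (u'')²`. -/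
theorem gradient_estimate_1d (h : ℝ) (hh : 1 / 2 < h) (u u' u'' : ℝ → ℝ)
    (hderiv : ∀ z ∈ Set.Icc (0 : ℝ) h, HasDerivAt u (u' z) z)
    (hderiv' : ∀ z ∈ Set.Icc (0 : ℝ) h, HasDerivAt u' (u'' z) z)
    (hcont : ContinuousOn u'' (Set.Icc (0 : ℝ) h))
    (hu0 : u 0 = 0) (φ α : ℝ) (hφ : φ = u h) (hα : α = u' h) :
    (∫ z in (0 : ℝ)..h, (u' z) ^ 2) ≤
      2 * φ * α + φ ^ 2 + 4 * h ^ 2 * (∫ z in (0 : ℝ)..h, (u'' z) ^ 2) := by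
  have hpos : 0 < h := by linarith
  have hsharp := integral_deriv_sq_le hpos hderiv hderiv' hcont hu0
  rw [sub_zero, ← hφ, ← hα] at hsharp
  have hY : 0 ≤ h ^ 2 * ∫ z in (0 : ℝ)..h, u'' z ^ 2 :=
    mul_nonneg (sq_nonneg h) (intervalIntegral.integral_nonneg hpos.le fun z _ => sq_nonneg _)
  linarith [sq_nonneg φ]
end
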